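/- arXiv:2202.07335 — 2 statements merged into one kernel-verified Lean document; each statement's English description precedes it below -/
import Mathlib

section
/- If a Borel probability measure μ on Σ_I is a Gibbs state of ψ with constants C ≥ 1 and P ∈ ℝ, then |a_n(ψ) − n·P| ≤ log C for every n ≥ 1; consequently ψ is summable, the limit P(ψ) = lim_{n→∞} a_n(ψ)/n exists, and P(ψ) = P. In particular the constant P in the Gibbs property is uniquely determined and equals the topological pressure of ψ. -/
open Filter Topology MeasureTheory

/-- The shift map on the two-sided shift space `Σ_I = ℤ → I`. -/
def zshift {I : Type*} (τ : ℤ → I) : ℤ → I := fun k => τ (k + 1)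

/-- The Birkhoff sum `S_nψ = Σ_{k=0}^{n−1} ψ∘σ^k`. -/
def birkhoffZ {I : Type*} (ψ : (ℤ → I) → ℝ) (n : ℕ) (τ : ℤ → I) : ℝ :=
  ∑ k ∈ Finset.range n, ψ (zshift^[k] τ)

/-- The cylinder `[ω]_0^{n−1}` determined by a finite word `ω ∈ I^n`. -/
def cylZ {I : Type*} {n : ℕ} (ω : Fin n → I) : Set (ℤ → I) :=
  {τ | ∀ k : Fin n, τ ((k : ℕ) : ℤ) = ω k}

/- The partition function `Z_n(ψ) = Σ_{ω ∈ I^n} exp( sup_{τ ∈ [ω]_0^{n−1}} S_nψ(τ) )`,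
computed in `[0,∞]`; note `a_n(ψ) = log (partitionFn ψ n)`. -/
noncomputable def partitionFn {I : Type*} (ψ : (ℤ → I) → ℝ) (n : ℕ) : ENNReal :=
  ∑' ω : Fin n → I, ⨆ τ ∈ cylZ ω, ENNReal.ofReal (Real.exp (birkhoffZ ψ n τ))

lemma cylZ_measurable {I : Type*} [MeasurableSpace I] [DiscreteMeasurableSpace I]
    {n : ℕ} (ω : Fin n → I) : MeasurableSet (cylZ ω) := by
  have h : cylZ ω = ⋂ k : Fin n, (fun τ : ℤ → I => τ ((k : ℕ) : ℤ)) ⁻¹' {ω k} := by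
    ext τ; simp [cylZ]
  rw [h]
  exact MeasurableSet.iInter fun k =>
    (measurable_pi_apply _) (measurableSet_singleton _)

lemma tsum_cylZ {I : Type*} [Countable I] [MeasurableSpace I] [DiscreteMeasurableSpace I]
    (μ : Measure (ℤ → I)) [IsProbabilityMeasure μ] (n : ℕ) :
    ∑' ω : Fin n → I, μ (cylZ ω) = 1 := by
  have hdisj : Pairwise (Function.onFun Disjoint fun ω : Fin n → I => cylZ ω) := by
    intro ω ω' hne
    rw [Function.onFun, Set.disjoint_left]
    intro τ hτ hτ'
    exact hne (funext fun k => by rw [← hτ k, hτ' k])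
  rw [← measure_iUnion hdisj fun ω => cylZ_measurable ω]
  have hU : ⋃ ω : Fin n → I, cylZ ω = Set.univ := by
    ext τ
    simp only [Set.mem_iUnion, Set.mem_univ, iff_true]
    exact ⟨fun k => τ ((k : ℕ) : ℤ), fun k => rfl⟩
  rw [hU, measure_univ]

/-- A point of the cylinder of a word. -/
noncomputable def extWord {I : Type*} [Nonempty I] {n : ℕ} (ω : Fin n → I) : ℤ → I :=
  fun j => if h : 0 ≤ j ∧ j < n then ω ⟨j.toNat, by omega⟩ else Classical.arbitrary I

lemma extWord_mem {I : Type*} [Nonempty I] {n : ℕ} (ω : Fin n → I) :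
    extWord ω ∈ cylZ ω := by
  intro k
  have h : (0 : ℤ) ≤ ((k : ℕ) : ℤ) ∧ ((k : ℕ) : ℤ) < n := by
    constructor
    · positivity
    · exact_mod_cast k.isLt
  rw [extWord, dif_pos h]
  simp

/-- If `μ` is a Gibbs state of `ψ` with constants `C ≥ 1`, `P ∈ ℝ`, then
`|a_n(ψ) − n·P| ≤ log C` for every `n ≥ 1` (stated as
`exp(nP − log C) ≤ Z_n(ψ) ≤ exp(nP + log C)`), hence `ψ` is summable and
`P(ψ) = lim_n a_n(ψ)/n` exists and equals `P`. -/
theorem stmt_8 {I : Type*} [Countable I] [Nonempty I]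
    [MeasurableSpace I] [DiscreteMeasurableSpace I]
    (ψ : (ℤ → I) → ℝ) (μ : Measure (ℤ → I)) [IsProbabilityMeasure μ]
    (C : ℝ) (hC : 1 ≤ C) (P : ℝ)
    (hGibbs : ∀ n : ℕ, 1 ≤ n → ∀ τ : ℤ → I,
      ENNReal.ofReal (C⁻¹ * Real.exp (birkhoffZ ψ n τ - P * n)) ≤
          μ (cylZ (fun k : Fin n => τ ((k : ℕ) : ℤ))) ∧
        μ (cylZ (fun k : Fin n => τ ((k : ℕ) : ℤ))) ≤
          ENNReal.ofReal (C * Real.exp (birkhoffZ ψ n τ - P * n))) :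
    (∀ n : ℕ, 1 ≤ n →
      ENNReal.ofReal (Real.exp (n * P - Real.log C)) ≤ partitionFn ψ n ∧
        partitionFn ψ n ≤ ENNReal.ofReal (Real.exp (n * P + Real.log C))) ∧
    partitionFn ψ 1 < ⊤ ∧
    Tendsto (fun n : ℕ => Real.log (partitionFn ψ n).toReal / n) atTop (𝓝 P) := by
  have hC0 : (0 : ℝ) < C := lt_of_lt_of_le one_pos hC
  have key : ∀ n : ℕ, 1 ≤ n →
      ENNReal.ofReal (Real.exp (n * P - Real.log C)) ≤ partitionFn ψ n ∧
        partitionFn ψ n ≤ ENNReal.ofReal (Real.exp (n * P + Real.log C)) := by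
    intro n hn
    constructor
    · -- lower bound
      have h2 : ∀ ω : Fin n → I, μ (cylZ ω) ≤
          ENNReal.ofReal (C * Real.exp (-(P * n))) *
            ⨆ τ ∈ cylZ ω, ENNReal.ofReal (Real.exp (birkhoffZ ψ n τ)) := by
        intro ω
        have hmem := extWord_mem ω
        have hω : (fun k : Fin n => extWord ω ((k : ℕ) : ℤ)) = ω := funext fun k => hmem k
        have h := (hGibbs n hn (extWord ω)).2
        rw [hω] at h
        refine h.trans ?_
        have heq : C * Real.exp (birkhoffZ ψ n (extWord ω) - P * n) =
            (C * Real.exp (-(P * n))) * Real.exp (birkhoffZ ψ n (extWord ω)) := by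
          rw [Real.exp_sub, Real.exp_neg]; ring
        rw [heq, ENNReal.ofReal_mul (by positivity)]
        exact mul_le_mul_right
          (le_iSup₂ (f := fun τ (_ : τ ∈ cylZ ω) =>
            ENNReal.ofReal (Real.exp (birkhoffZ ψ n τ))) (extWord ω) hmem) _
      have h1 : (1 : ENNReal) ≤
          ENNReal.ofReal (C * Real.exp (-(P * n))) * partitionFn ψ n := by
        calc (1 : ENNReal) = ∑' ω : Fin n → I, μ (cylZ ω) := (tsum_cylZ μ n).symm
          _ ≤ ∑' ω : Fin n → I, ENNReal.ofReal (C * Real.exp (-(P * n))) *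
                ⨆ τ ∈ cylZ ω, ENNReal.ofReal (Real.exp (birkhoffZ ψ n τ)) :=
              ENNReal.tsum_le_tsum h2
          _ = _ := ENNReal.tsum_mul_left
      have ha0 : ENNReal.ofReal (C * Real.exp (-(P * n))) ≠ 0 :=
        (ENNReal.ofReal_pos.mpr (by positivity)).ne'
      have hat : ENNReal.ofReal (C * Real.exp (-(P * n))) ≠ ⊤ := ENNReal.ofReal_ne_top
      have hinv : ENNReal.ofReal (Real.exp (n * P - Real.log C)) =
          1 / ENNReal.ofReal (C * Real.exp (-(P * n))) := by
        rw [one_div, ← ENNReal.ofReal_inv_of_pos (by positivity)]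
        congr 1
        rw [Real.exp_sub, Real.exp_neg, Real.exp_log hC0, mul_comm (n : ℝ) P,
          mul_inv, inv_inv, div_eq_mul_inv, mul_comm]
      rw [hinv, ENNReal.div_le_iff_le_mul (Or.inl ha0) (Or.inl hat), mul_comm]
      exact h1
    · -- upper bound
      have h1 : ∀ ω : Fin n → I,
          (⨆ τ ∈ cylZ ω, ENNReal.ofReal (Real.exp (birkhoffZ ψ n τ))) ≤
            ENNReal.ofReal (C * Real.exp (P * n)) * μ (cylZ ω) := by
        intro ω
        refine iSup₂_le fun τ hτ => ?_
        have hω : (fun k : Fin n => τ ((k : ℕ) : ℤ)) = ω := funext fun k => hτ k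
        have h := (hGibbs n hn τ).1
        rw [hω] at h
        calc ENNReal.ofReal (Real.exp (birkhoffZ ψ n τ))
            = ENNReal.ofReal (C * Real.exp (P * n)) *
                ENNReal.ofReal (C⁻¹ * Real.exp (birkhoffZ ψ n τ - P * n)) := by
              rw [← ENNReal.ofReal_mul (by positivity)]
              congr 1
              rw [Real.exp_sub]
              field_simp
          _ ≤ _ := mul_le_mul_right h _
      calc partitionFn ψ n
          ≤ ∑' ω : Fin n → I, ENNReal.ofReal (C * Real.exp (P * n)) * μ (cylZ ω) :=
            ENNReal.tsum_le_tsum h1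
        _ = ENNReal.ofReal (C * Real.exp (P * n)) := by
            rw [ENNReal.tsum_mul_left, tsum_cylZ μ n, mul_one]
        _ = ENNReal.ofReal (Real.exp (n * P + Real.log C)) := by
            congr 1
            rw [Real.exp_add, Real.exp_log hC0, mul_comm (n : ℝ) P, mul_comm]
  refine ⟨key, ?_, ?_⟩
  · exact lt_of_le_of_lt (key 1 le_rfl).2 ENNReal.ofReal_lt_top
  · -- tendsto
    have hfin : ∀ n : ℕ, 1 ≤ n → partitionFn ψ n ≠ ⊤ := fun n hn =>
      (lt_of_le_of_lt (key n hn).2 ENNReal.ofReal_lt_top).ne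
    have hbounds : ∀ n : ℕ, 1 ≤ n →
        (n : ℝ) * P - Real.log C ≤ Real.log (partitionFn ψ n).toReal ∧
          Real.log (partitionFn ψ n).toReal ≤ (n : ℝ) * P + Real.log C := by
      intro n hn
      have h1 : Real.exp (n * P - Real.log C) ≤ (partitionFn ψ n).toReal :=
        (ENNReal.ofReal_le_iff_le_toReal (hfin n hn)).mp (key n hn).1
      have h2 : (partitionFn ψ n).toReal ≤ Real.exp (n * P + Real.log C) :=
        ENNReal.toReal_le_of_le_ofReal (Real.exp_pos _).le (key n hn).2
      constructor
      · calc (n : ℝ) * P - Real.log C = Real.log (Real.exp (n * P - Real.log C)) :=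
            (Real.log_exp _).symm
          _ ≤ _ := Real.log_le_log (Real.exp_pos _) h1
      · calc Real.log (partitionFn ψ n).toReal ≤ Real.log (Real.exp (n * P + Real.log C)) :=
            Real.log_le_log (lt_of_lt_of_le (Real.exp_pos _) h1) h2
          _ = _ := Real.log_exp _
    have hlim : Tendsto (fun n : ℕ => Real.log C / (n : ℝ)) atTop (𝓝 0) :=
      tendsto_const_div_atTop_nhds_zero_nat _
    have hg : Tendsto (fun n : ℕ => P - Real.log C / (n : ℝ)) atTop (𝓝 P) := by
      simpa using tendsto_const_nhds.sub hlim
    have hh : Tendsto (fun n : ℕ => P + Real.log C / (n : ℝ)) atTop (𝓝 P) := by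
      simpa using tendsto_const_nhds.add hlim
    refine tendsto_of_tendsto_of_tendsto_of_le_of_le' hg hh ?_ ?_
    · filter_upwards [eventually_ge_atTop 1] with n hn
      have hn0 : (0 : ℝ) < (n : ℝ) := by exact_mod_cast hn
      have := (div_le_div_iff_of_pos_right hn0).mpr (hbounds n hn).1
      rwa [sub_div, mul_div_cancel_left₀ P hn0.ne'] at this
    · filter_upwards [eventually_ge_atTop 1] with n hn
      have hn0 : (0 : ℝ) < (n : ℝ) := by exact_mod_cast hn
      have := (div_le_div_iff_of_pos_right hn0).mpr (hbounds n hn).2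
      rwa [add_div, mul_div_cancel_left₀ P hn0.ne'] at this
end

section
/- Assume the non-accumulation condition: for every ω ∈ Σ_I^+ and every i ∈ I, the point φ_i(π(ω)) does not belong to the closure of {φ_j(π(ω)) : j ∈ I, j ≠ i}. Then for every ω ∈ Σ_I^+, every i ∈ I, and every finite family K_1, …, K_m of closed subsets of V with φ_i(π(ω)) ∉ K_r for 1 ≤ r ≤ m, there exists n ≥ 0 such that the compact set φ_i ∘ φ_{ω_0} ∘ … ∘ φ_{ω_n}(V) is disjoint from each K_r and contains none of the points φ_j(π(ω)) for j ∈ I with j ≠ i. (This shows that the unfolding indices n_k(ω) in the construction of the maximal Smale system associated to S are well defined.) -/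
open Filter Topology

/-- `itComp φ ω n x = φ_{ω 0} ∘ φ_{ω 1} ∘ … ∘ φ_{ω n} (x)`. -/
def itComp {I X : Type*} (φ : I → X → X) (ω : ℕ → I) : ℕ → X → X
  | 0, x => φ (ω 0) x
  | n + 1, x => itComp φ ω n (φ (ω (n + 1)) x)

lemma itComp_mapsTo {I X : Type*} (φ : I → X → X) (ω : ℕ → I)
    {V : Set X} (hmaps : ∀ i, Set.MapsTo (φ i) V V) :
    ∀ n, Set.MapsTo (itComp φ ω n) V V := by
  intro n
  induction n with
  | zero => exact hmaps (ω 0)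
  | succ n ih => exact fun x hx => ih (hmaps (ω (n + 1)) hx)

lemma itComp_contract {I X : Type*} [PseudoMetricSpace X] (φ : I → X → X) (ω : ℕ → I)
    {V : Set X} (hmaps : ∀ i, Set.MapsTo (φ i) V V)
    {s : ℝ} (hs0 : 0 ≤ s)
    (hcontr : ∀ i, ∀ x ∈ V, ∀ y ∈ V, dist (φ i x) (φ i y) ≤ s * dist x y) :
    ∀ n, ∀ x ∈ V, ∀ y ∈ V,
      dist (itComp φ ω n x) (itComp φ ω n y) ≤ s ^ (n + 1) * dist x y := by
  intro n
  induction n with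
  | zero => intro x hx y hy; simpa [itComp] using hcontr (ω 0) x hx y hy
  | succ n ih =>
    intro x hx y hy
    have h1 := ih (φ (ω (n + 1)) x) (hmaps _ hx) (φ (ω (n + 1)) y) (hmaps _ hy)
    have h2 := hcontr (ω (n + 1)) x hx y hy
    calc dist (itComp φ ω (n + 1) x) (itComp φ ω (n + 1) y)
        = dist (itComp φ ω n (φ (ω (n + 1)) x)) (itComp φ ω n (φ (ω (n + 1)) y)) := rfl
      _ ≤ s ^ (n + 1) * dist (φ (ω (n + 1)) x) (φ (ω (n + 1)) y) := h1
      _ ≤ s ^ (n + 1) * (s * dist x y) := by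
          exact mul_le_mul_of_nonneg_left h2 (pow_nonneg hs0 _)
      _ = s ^ (n + 1 + 1) * dist x y := by ring

/-- Under the non-accumulation condition, for every `ω`, every `i ∈ I` and every finite
family of closed sets `K_1, …, K_m` avoiding `φ_i(π(ω))`, there is `n ≥ 0` such that the
compact set `φ_i ∘ φ_{ω_0} ∘ … ∘ φ_{ω_n}(V)` is disjoint from each `K_r` and contains no
point `φ_j(π(ω))`, `j ≠ i`. (This makes the unfolding indices `n_k(ω)` of the maximal
Smale system associated to `S` well defined.) -/
theorem stmt_14 {D : ℕ} (hD : 1 ≤ D) {I : Type*} [Countable I]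
    (V : Set (EuclideanSpace ℝ (Fin D))) (hVne : V.Nonempty) (hVcomp : IsCompact V)
    (φ : I → EuclideanSpace ℝ (Fin D) → EuclideanSpace ℝ (Fin D))
    (hmaps : ∀ i, Set.MapsTo (φ i) V V)
    (s : ℝ) (hs0 : 0 < s) (hs1 : s < 1)
    (hcontr : ∀ i, ∀ x ∈ V, ∀ y ∈ V, dist (φ i x) (φ i y) ≤ s * dist x y)
    (π : (ℕ → I) → EuclideanSpace ℝ (Fin D))
    (hπ : ∀ ω : ℕ → I, ∀ x ∈ V, Tendsto (fun n => itComp φ ω n x) atTop (𝓝 (π ω)))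
    (hnonacc : ∀ ω : ℕ → I, ∀ i : I,
      φ i (π ω) ∉ closure {y | ∃ j : I, j ≠ i ∧ y = φ j (π ω)}) :
    ∀ ω : ℕ → I, ∀ i : I, ∀ m : ℕ, ∀ K : Fin m → Set (EuclideanSpace ℝ (Fin D)),
      (∀ r, IsClosed (K r)) → (∀ r, φ i (π ω) ∉ K r) →
      ∃ n : ℕ,
        (∀ r, Disjoint ((φ i ∘ itComp φ ω n) '' V) (K r)) ∧
        (∀ j : I, j ≠ i → φ j (π ω) ∉ (φ i ∘ itComp φ ω n) '' V) := by
  intro ω i m K hKcl hKnot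
  obtain ⟨x₀, hx₀⟩ := hVne
  set p := π ω with hp
  have hmem : ∀ n, itComp φ ω n x₀ ∈ V := fun n => itComp_mapsTo φ ω hmaps n hx₀
  have hpV : p ∈ V :=
    hVcomp.isClosed.mem_of_tendsto (hπ ω x₀ hx₀) (Eventually.of_forall hmem)
  set C := {y | ∃ j : I, j ≠ i ∧ y = φ j p} with hC
  set K' := (⋃ r, K r) ∪ closure C with hK'
  have hK'closed : IsClosed K' := (isClosed_iUnion_of_finite hKcl).union isClosed_closure
  have hpK' : φ i p ∉ K' := by
    intro h
    rcases h with h | h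
    · obtain ⟨r, hr⟩ := Set.mem_iUnion.mp h; exact hKnot r hr
    · exact hnonacc ω i h
  obtain ⟨ε, hε0, hball⟩ := Metric.isOpen_iff.mp hK'closed.isOpen_compl _ hpK'
  have hs0' : (0 : ℝ) ≤ s := hs0.le
  have h1 : Tendsto (fun n : ℕ => s ^ (n + 1)) atTop (𝓝 0) :=
    (tendsto_pow_atTop_nhds_zero_of_lt_one hs0' hs1).comp (tendsto_add_atTop_nat 1)
  have h2 : Tendsto (fun n => dist (itComp φ ω n x₀) p) atTop (𝓝 0) :=
    tendsto_iff_dist_tendsto_zero.mp (hπ ω x₀ hx₀)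
  have hRlim : Tendsto
      (fun n => s * (s ^ (n + 1) * Metric.diam V + dist (itComp φ ω n x₀) p)) atTop (𝓝 0) := by
    have := ((h1.mul_const (Metric.diam V)).add h2).const_mul s
    simpa using this
  obtain ⟨n, hn⟩ := (hRlim.eventually (gt_mem_nhds hε0)).exists
  have hkey : ∀ z ∈ (φ i ∘ itComp φ ω n) '' V, dist z (φ i p) < ε := by
    rintro z ⟨x, hx, rfl⟩
    have hyV : itComp φ ω n x ∈ V := itComp_mapsTo φ ω hmaps n hx
    have hA : dist (φ i (itComp φ ω n x)) (φ i p) ≤ s * dist (itComp φ ω n x) p :=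
      hcontr i _ hyV _ hpV
    have hB : dist (itComp φ ω n x) p
        ≤ s ^ (n + 1) * Metric.diam V + dist (itComp φ ω n x₀) p := by
      calc dist (itComp φ ω n x) p
          ≤ dist (itComp φ ω n x) (itComp φ ω n x₀) + dist (itComp φ ω n x₀) p :=
            dist_triangle _ _ _
        _ ≤ s ^ (n + 1) * Metric.diam V + dist (itComp φ ω n x₀) p := by
            gcongr
            calc dist (itComp φ ω n x) (itComp φ ω n x₀)
                ≤ s ^ (n + 1) * dist x x₀ := itComp_contract φ ω hmaps hs0' hcontr n x hx x₀ hx₀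
              _ ≤ s ^ (n + 1) * Metric.diam V := by
                  exact mul_le_mul_of_nonneg_left
                    (Metric.dist_le_diam_of_mem hVcomp.isBounded hx hx₀) (pow_nonneg hs0' _)
    calc dist (φ i (itComp φ ω n x)) (φ i p)
        ≤ s * (s ^ (n + 1) * Metric.diam V + dist (itComp φ ω n x₀) p) :=
          hA.trans (mul_le_mul_of_nonneg_left hB hs0')
      _ < ε := hn
  have hsub : (φ i ∘ itComp φ ω n) '' V ⊆ K'ᶜ := fun z hz =>
    hball (Metric.mem_ball.mpr (hkey z hz))
  refine ⟨n, fun r => ?_, fun j hj hmem' => ?_⟩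
  · refine Set.disjoint_left.mpr fun z hz hzK => ?_
    exact hsub hz (Set.mem_union_left _ (Set.mem_iUnion.mpr ⟨r, hzK⟩))
  · exact hsub hmem' (Set.mem_union_right _ (subset_closure ⟨j, hj, rfl⟩))
end
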